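/- Suppose that both π and t are nilpotent elements of R. Let M be an S-module and let (q, f) be a hermitian quadratic form on M with values in R. If x, y ∈ M satisfy f(x, Π·y) = 1, then there exist elements x′, y′ in the S-submodule of M generated by x and y such that q(x′) = 0, q(y′) = 0, f(x′, y′) = 0 and f(x′, Π·y′) = 1. -/

import Mathlib

/-!
STATEMENT 13: Suppose `π` and `t` are nilpotent in `R`, let `S = R[Π] = R[T]/(T² - t·T + π)`,
let `M` be an `S`-module and `(q, f)` a hermitian quadratic form on `M` with values in `R`.
If `x, y ∈ M` satisfy `f(x, Π·y) = 1`, then there exist `x', y'` in the `S`-submodule of `M`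
generated by `x` and `y` with `q(x') = q(y') = 0`, `f(x', y') = 0` and `f(x', Π·y') = 1`.
-/

open Polynomial

noncomputable section

/-- The quadratic `R`-algebra `S = R[Π] := R[T]/(T² - t·T + π)`. -/
abbrev Squad (R : Type) [CommRing R] (t π : R) : Type :=
  AdjoinRoot (X ^ 2 - Polynomial.C t * X + Polynomial.C π)

/-- The image `Π` of `T` in `S = R[T]/(T² - t·T + π)`. -/
noncomputable def PiRoot (R : Type) [CommRing R] (t π : R) : Squad R t π :=
  AdjoinRoot.root _

/-- A hermitian quadratic form with values in `R` on a module `M` over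
`S = R[T]/(T² - t·T + π)`, relative to the involution `σ` and the norm `Nrm` of `S`. -/
structure HermitianQuadForm (R : Type) [CommRing R] (S : Type) [CommRing S] [Algebra R S]
    (σ : S → S) (Nrm : S → R) (M : Type) [AddCommGroup M] [Module S M] where
  q : M → R
  f : M → M → R
  f_symm : ∀ m n, f m n = f n m
  f_add_left : ∀ m m' n, f (m + m') n = f m n + f m' n
  f_smul_left : ∀ (r : R) (m n : M), f ((algebraMap R S r) • m) n = r * f m n
  polar : ∀ m n, f m n = q (m + n) - q m - q n
  q_smul : ∀ (x : S) (m : M), q (x • m) = Nrm x * q m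
  f_conj : ∀ (x : S) (m n : M), f (x • m) n = f m (σ x • n)


/-! The form `f` is the `Π`-coordinate of the `S`-valued form
`H(m, n) = f(m, Π n) - f(m, n) (t - Π)`, which is `S`-linear in `n` and `σ`-semilinear in `m`;
the conclusion says `q x' = q y' = 0` and `H(x', y') = 1`. As `Π` and `t - Π` are nilpotent,
`H(x, y) = 1 - f(x, y) (t - Π)` is a unit, and rescaling `y` gives `H(x, y) = 1`. Replacing `y` by
`y - r (t - Π) x`, where `r = q(y) + π q(x) r²` is solved by iteration since `π` is nilpotent,
makes `y` isotropic while `H(x, y)` stays a unit; rescale `y` once more. Then `x + q(x) (t - Π) y`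
is isotropic, and still pairs to `1` with `y` because `H(y, y) = q(y) (2Π - t) = 0`. -/

theorem exists_eq_add_mul_sq_of_isNilpotent {R : Type*} [CommRing R] {c : R} (hc : IsNilpotent c)
    (d : R) : ∃ r : R, r = d + c * r ^ 2 := by
  obtain ⟨n, hn⟩ := hc
  let r : ℕ → R := fun k ↦ (fun s ↦ d + c * s ^ 2)^[k] 0
  have hr : ∀ k, r (k + 1) = d + c * r k ^ 2 := fun k ↦ Function.iterate_succ_apply' _ k 0
  -- successive iterates agree to higher and higher order in `c`
  have hdiff : ∀ k, ∃ e, r (k + 1) - r k = c ^ k * e := by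
    intro k
    induction k with
    | zero => exact ⟨d, by simp [hr, r]⟩
    | succ k ih =>
      obtain ⟨e, he⟩ := ih
      refine ⟨(r (k + 1) + r k) * e, ?_⟩
      linear_combination hr (k + 1) - hr k + c * (r (k + 1) + r k) * he
  obtain ⟨e, he⟩ := hdiff n
  have hfix : r (n + 1) = r n := by rw [← sub_eq_zero, he, hn, zero_mul]
  exact ⟨r n, hfix.symm.trans (hr n)⟩

namespace HermitianQuadForm

section General

variable {R S M : Type} [CommRing R] [CommRing S] [Algebra R S] {σ : S → S} {Nrm : S → R}
  [AddCommGroup M] [Module S M] (h : HermitianQuadForm R S σ Nrm M)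

theorem f_add_right (m n n' : M) : h.f m (n + n') = h.f m n + h.f m n' := by
  rw [h.f_symm, h.f_add_left, h.f_symm n, h.f_symm n']

theorem f_sub_right (m n n' : M) : h.f m (n - n') = h.f m n - h.f m n' := by
  rw [eq_sub_iff_add_eq, ← f_add_right, sub_add_cancel]

theorem f_algebraMap_smul_right (r : R) (m n : M) :
    h.f m (algebraMap R S r • n) = r * h.f m n := by
  rw [h.f_symm, h.f_smul_left, h.f_symm n]

theorem q_add (m n : M) : h.q (m + n) = h.q m + h.q n + h.f m n := by
  rw [h.polar]
  ring

end General

end HermitianQuadForm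

section QuadraticAlgebra

variable {R : Type} [CommRing R] {t π : R}

local notation "𝕊" => Squad R t π
local notation "ϖ" => PiRoot R t π

namespace Squad

theorem piRoot_sq (t π : R) :
    PiRoot R t π ^ 2 = algebraMap R (Squad R t π) t * PiRoot R t π - algebraMap R _ π := by
  have h := AdjoinRoot.eval₂_root (X ^ 2 - C t * X + C π)
  simp only [eval₂_add, eval₂_sub, eval₂_mul, eval₂_X_pow, eval₂_X, eval₂_C] at h
  rw [PiRoot, AdjoinRoot.algebraMap_eq]
  linear_combination h

theorem eq_zero_of_algebraMap_add_mul_piRoot_eq_zero {a b : R}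
    (h : algebraMap R 𝕊 a + algebraMap R 𝕊 b * ϖ = 0) : a = 0 ∧ b = 0 := by
  nontriviality R
  have hmk : AdjoinRoot.mk (X ^ 2 - C t * X + C π) (C b * X + C a) = 0 := by
    rw [← h, PiRoot, AdjoinRoot.algebraMap_eq]
    simp only [map_add, map_mul, AdjoinRoot.mk_X, AdjoinRoot.mk_C]
    ring
  have hpoly : C b * X + C a = 0 := by
    by_contra hne
    have hdeg : (X ^ 2 - C t * X + C π).natDegree = 2 := by compute_degree!
    refine AdjoinRoot.mk_ne_zero_of_natDegree_lt (by monicity!) hne ?_ hmk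
    rw [hdeg]
    exact natDegree_linear_le.trans_lt one_lt_two
  exact ⟨by simpa using congrArg (coeff · 0) hpoly, by simpa using congrArg (coeff · 1) hpoly⟩

theorem algebraMap_injective (t π : R) : Function.Injective (algebraMap R (Squad R t π)) := by
  intro a b hab
  have h : algebraMap R (Squad R t π) (a - b) + algebraMap R _ 0 * PiRoot R t π = 0 := by
    rw [map_sub, hab, sub_self, map_zero, zero_mul, add_zero]
  exact sub_eq_zero.mp (eq_zero_of_algebraMap_add_mul_piRoot_eq_zero h).1

theorem isNilpotent_piRoot (ht : IsNilpotent t) (hπ : IsNilpotent π) : IsNilpotent ϖ := by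
  refine IsNilpotent.of_pow (m := 2) ?_
  rw [piRoot_sq]
  exact (Commute.all _ _).isNilpotent_sub
    ((Commute.all _ _).isNilpotent_mul_right (ht.map _)) (hπ.map _)

theorem isNilpotent_algebraMap_sub_piRoot (ht : IsNilpotent t) (hπ : IsNilpotent π) :
    IsNilpotent (algebraMap R 𝕊 t - ϖ) :=
  (Commute.all _ _).isNilpotent_sub (ht.map _) (isNilpotent_piRoot ht hπ)

theorem piRoot_smul_piRoot_smul {M : Type} [AddCommGroup M] [Module 𝕊 M] (n : M) :
    ϖ • ϖ • n = algebraMap R 𝕊 t • ϖ • n - algebraMap R 𝕊 π • n := by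
  rw [smul_smul, ← sq, piRoot_sq, sub_smul, mul_smul]

variable {σ : Squad R t π →ₐ[R] Squad R t π} {Nrm : Squad R t π → R}

theorem nrm_algebraMap (hN : ∀ s, s * σ s = algebraMap R 𝕊 (Nrm s)) (r : R) :
    Nrm (algebraMap R 𝕊 r) = r ^ 2 :=
  algebraMap_injective t π (by rw [← hN, σ.commutes, pow_two r, map_mul])

theorem nrm_algebraMap_add_mul_piRoot (hσ : σ ϖ = algebraMap R 𝕊 t - ϖ)
    (hN : ∀ s, s * σ s = algebraMap R 𝕊 (Nrm s)) (a b : R) :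
    Nrm (algebraMap R 𝕊 a + algebraMap R 𝕊 b * ϖ) = a ^ 2 + t * a * b + π * b ^ 2 := by
  refine algebraMap_injective t π ?_
  rw [← hN, map_add, map_mul, σ.commutes, σ.commutes, hσ]
  simp only [map_add, map_mul, map_pow]
  linear_combination (-algebraMap R 𝕊 b ^ 2) * piRoot_sq t π

end Squad

namespace HermitianQuadForm

section Sesquilinear

variable {σ : Squad R t π → Squad R t π} {Nrm : Squad R t π → R} {M : Type} [AddCommGroup M]
  [Module (Squad R t π) M] (h : HermitianQuadForm R (Squad R t π) σ Nrm M)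

/-- `h.f m n` is the `Π`-coordinate of `h.sesqForm m n` in the basis `1, Π`. -/
def sesqForm (m n : M) : 𝕊 :=
  algebraMap R 𝕊 (h.f m (ϖ • n)) - algebraMap R 𝕊 (h.f m n) * (algebraMap R 𝕊 t - ϖ)

theorem sesqForm_add_left (m m' n : M) :
    h.sesqForm (m + m') n = h.sesqForm m n + h.sesqForm m' n := by
  simp only [sesqForm, h.f_add_left, map_add]
  ring

theorem sesqForm_add_right (m n n' : M) :
    h.sesqForm m (n + n') = h.sesqForm m n + h.sesqForm m n' := by
  simp only [sesqForm, smul_add, f_add_right, map_add]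
  ring

theorem sesqForm_smul_right (s : 𝕊) (m n : M) : h.sesqForm m (s • n) = h.sesqForm m n * s := by
  have hs : s ∈ Algebra.adjoin R {ϖ} := by
    rw [PiRoot, AdjoinRoot.adjoinRoot_eq_top]
    exact Algebra.mem_top
  induction hs using Algebra.adjoin_induction generalizing n with
  | mem s hs =>
    rw [Set.mem_singleton_iff.mp hs]
    have hf : h.f m (ϖ • ϖ • n) = t * h.f m (ϖ • n) - π * h.f m n := by
      rw [Squad.piRoot_smul_piRoot_smul, f_sub_right, f_algebraMap_smul_right,
        f_algebraMap_smul_right]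
    simp only [sesqForm, hf, map_sub, map_mul]
    linear_combination (-algebraMap R 𝕊 (h.f m n)) * Squad.piRoot_sq t π
  | algebraMap r =>
    simp only [sesqForm, smul_comm ϖ (algebraMap R 𝕊 r) n, f_algebraMap_smul_right, map_mul]
    ring
  | add s s' _ _ hs hs' => rw [add_smul, sesqForm_add_right, hs, hs', mul_add]
  | mul s s' _ _ hs hs' => rw [mul_smul, hs, hs', mul_comm s, mul_assoc]

theorem sesqForm_smul_left (s : 𝕊) (m n : M) : h.sesqForm (s • m) n = h.sesqForm m n * σ s := by
  rw [← sesqForm_smul_right, sesqForm, sesqForm, h.f_conj, h.f_conj, smul_comm (σ s) ϖ n]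

theorem sesqForm_eq_one_iff {m n : M} :
    h.sesqForm m n = 1 ↔ h.f m n = 0 ∧ h.f m (ϖ • n) = 1 := by
  refine ⟨fun hmn ↦ ?_, fun ⟨h0, h1⟩ ↦ by simp [sesqForm, h0, h1]⟩
  have hz : algebraMap R 𝕊 (h.f m (ϖ • n) - t * h.f m n - 1)
      + algebraMap R 𝕊 (h.f m n) * ϖ = 0 := by
    simp only [sesqForm] at hmn
    simp only [map_sub, map_mul, map_one]
    linear_combination hmn
  obtain ⟨h1, h0⟩ := Squad.eq_zero_of_algebraMap_add_mul_piRoot_eq_zero hz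
  exact ⟨h0, by linear_combination h1 + t * h0⟩

theorem isUnit_sesqForm (ht : IsNilpotent t) (hπ : IsNilpotent π) {m n : M}
    (hmn : h.f m (ϖ • n) = 1) : IsUnit (h.sesqForm m n) := by
  rw [sesqForm, hmn, map_one]
  exact ((Commute.all _ _).isNilpotent_mul_left
    (Squad.isNilpotent_algebraMap_sub_piRoot ht hπ)).isUnit_one_sub

end Sesquilinear

section Hermitian

variable {σ : Squad R t π →ₐ[R] Squad R t π} {Nrm : Squad R t π → R} {M : Type} [AddCommGroup M]
  [Module (Squad R t π) M] (h : HermitianQuadForm R (Squad R t π) σ Nrm M)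

theorem f_piRoot_smul_swap (hσ : σ ϖ = algebraMap R 𝕊 t - ϖ) (m n : M) :
    h.f n (ϖ • m) = t * h.f m n - h.f m (ϖ • n) := by
  rw [h.f_symm, h.f_conj, hσ, sub_smul, f_sub_right, f_algebraMap_smul_right]

theorem f_self (hN : ∀ s, s * σ s = algebraMap R 𝕊 (Nrm s)) (m : M) : h.f m m = 2 * h.q m := by
  have htwo : m + m = algebraMap R 𝕊 2 • m := by rw [map_ofNat, two_smul]
  rw [h.polar, htwo, h.q_smul, Squad.nrm_algebraMap hN]
  ring

theorem f_piRoot_smul_self (hσ : σ ϖ = algebraMap R 𝕊 t - ϖ)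
    (hN : ∀ s, s * σ s = algebraMap R 𝕊 (Nrm s)) (m : M) : h.f m (ϖ • m) = t * h.q m := by
  have hpi : Nrm ϖ = π := by simpa using Squad.nrm_algebraMap_add_mul_piRoot hσ hN 0 1
  have hone : Nrm (1 + ϖ) = 1 + t + π := by
    simpa using Squad.nrm_algebraMap_add_mul_piRoot hσ hN 1 1
  have hsum : m + ϖ • m = (1 + ϖ) • m := by rw [add_smul, one_smul]
  rw [h.polar, hsum, h.q_smul, h.q_smul, hpi, hone]
  ring

theorem sesqForm_self (hσ : σ ϖ = algebraMap R 𝕊 t - ϖ)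
    (hN : ∀ s, s * σ s = algebraMap R 𝕊 (Nrm s)) (m : M) :
    h.sesqForm m m = algebraMap R 𝕊 (h.q m) * (2 * ϖ - algebraMap R 𝕊 t) := by
  rw [sesqForm, f_piRoot_smul_self h hσ hN, f_self h hN, map_mul, map_mul, map_ofNat]
  ring

theorem exists_q_add_smul_eq_zero_of_sesqForm_eq_one (ht : IsNilpotent t) (hπ : IsNilpotent π)
    (hσ : σ ϖ = algebraMap R 𝕊 t - ϖ) (hN : ∀ s, s * σ s = algebraMap R 𝕊 (Nrm s)) {x y : M}
    (hxy : h.sesqForm x y = 1) :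
    ∃ a : 𝕊, h.q (y + a • x) = 0 ∧ IsUnit (h.sesqForm x (y + a • x)) := by
  have hfpi := (h.sesqForm_eq_one_iff.mp hxy).2
  obtain ⟨r, hr⟩ := exists_eq_add_mul_sq_of_isNilpotent
    ((Commute.all π (h.q x)).isNilpotent_mul_right hπ) (h.q y)
  -- `a = -r (t - Π)`: then `N(a) = π r²` and `f(y, a x) = -r`, so `q(y + a x) = 0` by choice of `r`
  set a := algebraMap R 𝕊 (-(r * t)) + algebraMap R 𝕊 r * ϖ with ha
  have hσa : σ a = algebraMap R 𝕊 (-r) * ϖ := by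
    simp only [ha, map_add, map_mul, σ.commutes, hσ, map_neg]
    ring
  have hqa : h.q (a • x) = π * r ^ 2 * h.q x := by
    rw [h.q_smul, Squad.nrm_algebraMap_add_mul_piRoot hσ hN]
    ring
  have hfa : h.f y (a • x) = -r := by
    rw [h.f_symm, h.f_conj, hσa, mul_smul, f_algebraMap_smul_right, hfpi, mul_one]
  have ha_nil : IsNilpotent a := by
    have ha' : a = -(algebraMap R 𝕊 r * (algebraMap R 𝕊 t - ϖ)) := by
      rw [ha, map_neg, map_mul]
      ring
    rw [ha']
    exact ((Commute.all _ _).isNilpotent_mul_left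
      (Squad.isNilpotent_algebraMap_sub_piRoot ht hπ)).neg
  refine ⟨a, ?_, ?_⟩
  · rw [q_add, hqa, hfa]
    linear_combination -hr
  · rw [sesqForm_add_right, hxy, sesqForm_smul_right]
    exact ((Commute.all _ _).isNilpotent_mul_left ha_nil).isUnit_one_add

theorem exists_mem_span_q_eq_zero_sesqForm_eq_one (ht : IsNilpotent t) (hπ : IsNilpotent π)
    (hσ : σ ϖ = algebraMap R 𝕊 t - ϖ) (hN : ∀ s, s * σ s = algebraMap R 𝕊 (Nrm s)) {x y : M}
    (hxy : IsUnit (h.sesqForm x y)) :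
    ∃ y' ∈ Submodule.span 𝕊 {x, y}, h.q y' = 0 ∧ h.sesqForm x y' = 1 := by
  obtain ⟨c, hc⟩ := hxy.exists_right_inv
  obtain ⟨a, hqa, hunit⟩ := h.exists_q_add_smul_eq_zero_of_sesqForm_eq_one ht hπ hσ hN
    (x := x) (y := c • y) (by rw [sesqForm_smul_right, hc])
  obtain ⟨c', hc'⟩ := hunit.exists_right_inv
  refine ⟨c' • (c • y + a • x), ?_, by rw [h.q_smul, hqa, mul_zero],
    by rw [sesqForm_smul_right, hc']⟩
  have hx : x ∈ Submodule.span 𝕊 {x, y} := Submodule.subset_span (by simp)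
  have hy : y ∈ Submodule.span 𝕊 {x, y} := Submodule.subset_span (by simp)
  exact Submodule.smul_mem _ _ (add_mem (Submodule.smul_mem _ _ hy) (Submodule.smul_mem _ _ hx))

theorem exists_q_add_smul_eq_zero_of_q_eq_zero (hσ : σ ϖ = algebraMap R 𝕊 t - ϖ)
    (hN : ∀ s, s * σ s = algebraMap R 𝕊 (Nrm s)) {x y : M} (hxy : h.sesqForm x y = 1)
    (hy : h.q y = 0) : ∃ w : 𝕊, h.q (x + w • y) = 0 ∧ h.sesqForm (x + w • y) y = 1 := by
  obtain ⟨hf, hfpi⟩ := h.sesqForm_eq_one_iff.mp hxy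
  set w := algebraMap R 𝕊 (h.q x) * (algebraMap R 𝕊 t - ϖ)
  have hσw : σ w = algebraMap R 𝕊 (h.q x) * ϖ := by
    rw [map_mul, σ.commutes, map_sub, σ.commutes, hσ]
    ring
  refine ⟨w, ?_, ?_⟩
  · rw [q_add, h.q_smul, hy, h.f_symm, h.f_conj, hσw, mul_smul, f_algebraMap_smul_right,
      f_piRoot_smul_swap h hσ, hf, hfpi]
    ring
  · rw [sesqForm_add_left, hxy, sesqForm_smul_left, sesqForm_self h hσ hN, hy, map_zero,
      zero_mul, zero_mul, add_zero]

end Hermitian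

end HermitianQuadForm

end QuadraticAlgebra

theorem statement13 (R : Type) [CommRing R] (t π : R)
    (hπ : IsNilpotent π) (ht : IsNilpotent t)
    (σ : Squad R t π →ₐ[R] Squad R t π)
    (hσ : σ (PiRoot R t π) = algebraMap R (Squad R t π) t - PiRoot R t π)
    (Nrm : Squad R t π → R)
    (hN : ∀ x : Squad R t π, x * σ x = algebraMap R (Squad R t π) (Nrm x))
    (M : Type) [AddCommGroup M] [Module (Squad R t π) M]
    (h : HermitianQuadForm R (Squad R t π) (⇑σ) Nrm M)
    (x y : M) (hxy : h.f x (PiRoot R t π • y) = 1) :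
    ∃ x' y' : M,
      x' ∈ Submodule.span (Squad R t π) ({x, y} : Set M) ∧
      y' ∈ Submodule.span (Squad R t π) ({x, y} : Set M) ∧
      h.q x' = 0 ∧ h.q y' = 0 ∧ h.f x' y' = 0 ∧ h.f x' (PiRoot R t π • y') = 1 := by
  obtain ⟨y', hy'_mem, hqy', hxy'⟩ :=
    h.exists_mem_span_q_eq_zero_sesqForm_eq_one ht hπ hσ hN (h.isUnit_sesqForm ht hπ hxy)
  obtain ⟨w, hqx', hx'y'⟩ := h.exists_q_add_smul_eq_zero_of_q_eq_zero hσ hN hxy' hqy'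
  have hx_mem : x ∈ Submodule.span (Squad R t π) ({x, y} : Set M) :=
    Submodule.subset_span (by simp)
  obtain ⟨hf, hfpi⟩ := h.sesqForm_eq_one_iff.mp hx'y'
  exact ⟨x + w • y', y', add_mem hx_mem (Submodule.smul_mem _ w hy'_mem), hy'_mem, hqx', hqy',
    hf, hfpi⟩
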